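/- Comparison of Dirichlet forms: for every β ≥ 0, every positive integer N divisible by 3, and every function f : Ω_N → ℝ, the complete-graph Dirichlet form is bounded by the nearest-neighbor one: 𝒟_N^β(f,f) ≤ 2 e^{3β} N² D_N^β(f,f). -/

import Mathlib

/-!
Canonical paths. For `x < y`, the exchange of `x` and `y` is the composite of the
`n = 2(y - x) - 1` nearest-neighbour exchanges at the bonds `y-1, …, x+1, x, x+1, …, y-1`,
a path that crosses every bond at most twice. Each of its steps changes `H_N` by at most `1/N²`,
so a step changes the Gibbs weight by a factor at most `e^{β/N}`, and
`|H_N(ζ^{x,y}) - H_N(ζ)| ≤ n/N²` gives `c_{x,y} ≤ e^{βn/(2N)}/N`. Cauchy–Schwarz along the path bounds `(∇_{x,y} f)²` by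
`n` times the sum of the squared nearest-neighbour gradients along it, and `c_z ≥ e^{-β/(2N)}`.
As `n < 2N`, every pair `{x,y}` contributes at most `8 e^{3β} D_N^β(f,f)`.
-/

open Finset Filter Topology MeasureTheory
open scoped BigOperators

attribute [local instance] Classical.propDecidable

namespace ABC

/-- Occupation indicator. Labels: `0 = A`, `1 = B`, `2 = C`. -/
def eta {N : ℕ} (ζ : Fin N → Fin 3) (α : Fin 3) (x : Fin N) : ℝ :=
  if ζ x = α then 1 else 0

/-- The equal-density constraint defining `Ω_N`. -/
def inOmega {N : ℕ} (ζ : Fin N → Fin 3) : Prop :=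
  ∀ α : Fin 3, 3 * (Finset.univ.filter (fun x => ζ x = α)).card = N

/-- The configuration space `Ω_N` as a finite set. -/
noncomputable def OmegaF (N : ℕ) : Finset (Fin N → Fin 3) :=
  Finset.univ.filter (fun ζ => inOmega ζ)

/-- The mean-field Hamiltonian `H_N`. -/
noncomputable def HN {N : ℕ} (ζ : Fin N → Fin 3) : ℝ :=
  (1 / (N : ℝ) ^ 2) *
    ∑ x : Fin N, ∑ y : Fin N,
      if (x : ℕ) < (y : ℕ) then
        eta ζ 0 x * eta ζ 2 y + eta ζ 1 x * eta ζ 0 y + eta ζ 2 x * eta ζ 1 y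
      else 0

/-- The partition function `Z_N^β`. -/
noncomputable def Zpart (N : ℕ) (β : ℝ) : ℝ :=
  ∑ ζ ∈ OmegaF N, Real.exp (-(β * N * HN ζ))

/-- The Gibbs measure `ν_N^β`. -/
noncomputable def nu (N : ℕ) (β : ℝ) (ζ : Fin N → Fin 3) : ℝ :=
  Real.exp (-(β * N * HN ζ)) / Zpart N β

/-- Expectation with respect to `ν_N^β`. -/
noncomputable def expect (N : ℕ) (β : ℝ) (f : (Fin N → Fin 3) → ℝ) : ℝ :=
  ∑ ζ ∈ OmegaF N, nu N β ζ * f ζ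

/-- Variance with respect to `ν_N^β`. -/
noncomputable def varNu (N : ℕ) (β : ℝ) (f : (Fin N → Fin 3) → ℝ) : ℝ :=
  expect N β (fun ζ => (f ζ - expect N β f) ^ 2)

/-- The configuration `ζ^{x,y}` obtained by exchanging the values at `x` and `y`. -/
def exch {N : ℕ} (ζ : Fin N → Fin 3) (x y : Fin N) : Fin N → Fin 3 :=
  fun z => if z = x then ζ y else if z = y then ζ x else ζ z

/-- The gradient `∇_{x,y} f`. -/
def grad {N : ℕ} (f : (Fin N → Fin 3) → ℝ) (x y : Fin N) (ζ : Fin N → Fin 3) : ℝ :=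
  f (exch ζ x y) - f ζ

/-- Cyclic successor `x + 1` in `Z_N`. -/
def fsucc {N : ℕ} (x : Fin N) : Fin N := ⟨(x.val + 1) % N, Nat.mod_lt _ x.pos⟩

/-- Nearest-neighbour jump rates `c_x^{β,N}`. -/
noncomputable def cnn {N : ℕ} (β : ℝ) (x : Fin N) (ζ : Fin N → Fin 3) : ℝ :=
  if (ζ x = 0 ∧ ζ (fsucc x) = 2) ∨ (ζ x = 2 ∧ ζ (fsucc x) = 1) ∨
      (ζ x = 1 ∧ ζ (fsucc x) = 0) then
    Real.exp (-(β / (2 * N)))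
  else Real.exp (β / (2 * N))

/-- Dirichlet form `D_N^β` of the ABC generator. -/
noncomputable def Dnn (N : ℕ) (β : ℝ) (f : (Fin N → Fin 3) → ℝ) : ℝ :=
  (1 / 2) * ∑ x : Fin N, expect N β (fun ζ => cnn β x ζ * (grad f x (fsucc x) ζ) ^ 2)

/-- Complete-graph jump rates `c_{x,y}^{β,N}`. -/
noncomputable def ccg {N : ℕ} (β : ℝ) (x y : Fin N) (ζ : Fin N → Fin 3) : ℝ :=
  (1 / (N : ℝ)) * Real.exp (-(β * N / 2) * (HN (exch ζ x y) - HN ζ))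

/-- Dirichlet form `𝒟_N^β` of the complete-graph ABC generator (the sum over
unordered pairs `{x,y}` is written as half the sum over ordered distinct pairs). -/
noncomputable def Dcg (N : ℕ) (β : ℝ) (f : (Fin N → Fin 3) → ℝ) : ℝ :=
  (1 / 2) * ((1 / 2) * ∑ x : Fin N, ∑ y : Fin N,
    if x ≠ y then expect N β (fun ζ => ccg β x y ζ * (grad f x y ζ) ^ 2) else 0)

theorem sq_sum_map_le_length_mul {κ : Type*} (l : List κ) (g : κ → ℝ) :
    (l.map g).sum ^ 2 ≤ l.length * (l.map fun b => g b ^ 2).sum := by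
  rw [← Fin.sum_univ_fun_getElem, ← Fin.sum_univ_fun_getElem]
  simpa using sq_sum_le_card_mul_sum_sq (s := Finset.univ) (f := fun i : Fin l.length => g l[i.1])

theorem sum_map_le_mul_sum_of_count_le {ι : Type*} [Fintype ι] [DecidableEq ι] {l : List ι}
    {k : ℕ} (hl : ∀ i, l.count i ≤ k) {G : ι → ℝ} (hG : ∀ i, 0 ≤ G i) :
    (l.map G).sum ≤ k * ∑ i, G i := by
  rw [Finset.sum_list_map_count, Finset.mul_sum]
  calc ∑ i ∈ l.toFinset, l.count i • G i ≤ ∑ i ∈ l.toFinset, k * G i := by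
        gcongr with i
        rw [nsmul_eq_mul]
        exact mul_le_mul_of_nonneg_right (by exact_mod_cast hl i) (hG i)
    _ ≤ ∑ i, k * G i :=
        Finset.sum_le_sum_of_subset_of_nonneg (Finset.subset_univ _)
          fun i _ _ => mul_nonneg k.cast_nonneg (hG i)

section Walk

variable {α ι : Type*} (T : ι → α → α)

def walk (l : List ι) (ζ : α) : α := l.foldl (fun ξ i => T i ξ) ζ

def walkSteps : List ι → α → List (ι × α)
  | [], _ => []
  | i :: l, ζ => (i, ζ) :: walkSteps l (T i ζ)

variable {T}

@[simp] theorem walk_nil (ζ : α) : walk T [] ζ = ζ := rfl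

@[simp] theorem walk_cons (i : ι) (l : List ι) (ζ : α) : walk T (i :: l) ζ = walk T l (T i ζ) := rfl

theorem walk_append (l l' : List ι) (ζ : α) : walk T (l ++ l') ζ = walk T l' (walk T l ζ) :=
  List.foldl_append

@[simp] theorem length_walkSteps (l : List ι) (ζ : α) : (walkSteps T l ζ).length = l.length := by
  induction l generalizing ζ <;> simp [walkSteps, *]

theorem sub_walk_eq_sum_walkSteps (f : α → ℝ) (l : List ι) (ζ : α) :
    f (walk T l ζ) - f ζ = ((walkSteps T l ζ).map fun s => f (T s.1 s.2) - f s.2).sum := by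
  induction l generalizing ζ with
  | nil => simp [walkSteps]
  | cons i l ih => simp only [walk_cons, walkSteps, List.map_cons, List.sum_cons, ← ih]; ring

theorem abs_sub_walk_le {E : α → ℝ} {δ : ℝ} {l : List ι} (hE : ∀ i ∈ l, ∀ ζ, |E (T i ζ) - E ζ| ≤ δ)
    (ζ : α) : |E (walk T l ζ) - E ζ| ≤ l.length * δ := by
  induction l generalizing ζ with
  | nil => simp
  | cons i l ih =>
    calc |E (walk T (i :: l) ζ) - E ζ|
        ≤ |E (walk T l (T i ζ)) - E (T i ζ)| + |E (T i ζ) - E ζ| := abs_sub_le _ _ _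
      _ ≤ l.length * δ + δ :=
          add_le_add (ih (fun j hj => hE j (List.mem_cons_of_mem i hj)) _) (hE i (by simp) ζ)
      _ = (i :: l).length * δ := by push_cast [List.length_cons]; ring

variable {Ω : Finset α}

theorem le_pow_mul_of_mem_walkSteps {w : α → ℝ} {K : ℝ} {l : List ι} (hK : 1 ≤ K)
    (hΩ : ∀ i ζ, ζ ∈ Ω → T i ζ ∈ Ω) (hw : ∀ ζ ∈ Ω, 0 ≤ w ζ)
    (hwT : ∀ i ∈ l, ∀ ζ ∈ Ω, w ζ ≤ K * w (T i ζ)) {ζ : α} (hζ : ζ ∈ Ω) :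
    ∀ s ∈ walkSteps T l ζ, w ζ ≤ K ^ l.length * w s.2 := by
  induction l generalizing ζ with
  | nil => simp [walkSteps]
  | cons i l ih =>
    rintro s (_ | ⟨_, hs⟩)
    · exact le_mul_of_one_le_left (hw ζ hζ) (one_le_pow₀ hK)
    · calc w ζ ≤ K * w (T i ζ) := hwT i (by simp) ζ hζ
        _ ≤ K * (K ^ l.length * w s.2) := by
            gcongr
            exact ih (fun j hj => hwT j (List.mem_cons_of_mem i hj)) (hΩ i ζ hζ) s hs
        _ = K ^ (i :: l).length * w s.2 := by rw [List.length_cons, pow_succ]; ring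

theorem sum_sum_walkSteps (hΩ : ∀ i ζ, ζ ∈ Ω → T i ζ ∈ Ω) (hT : ∀ i, Function.Involutive (T i))
    (F : ι × α → ℝ) (l : List ι) :
    ∑ ζ ∈ Ω, ((walkSteps T l ζ).map F).sum = (l.map fun i => ∑ ζ ∈ Ω, F (i, ζ)).sum := by
  induction l with
  | nil => simp [walkSteps]
  | cons i l ih =>
    have hreindex : ∑ ζ ∈ Ω, ((walkSteps T l (T i ζ)).map F).sum
        = ∑ ζ ∈ Ω, ((walkSteps T l ζ).map F).sum :=
      Finset.sum_nbij' (T i) (T i) (hΩ i) (hΩ i) (fun ζ _ => hT i ζ) (fun ζ _ => hT i ζ)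
        fun _ _ => rfl
    simp only [walkSteps, List.map_cons, List.sum_cons, Finset.sum_add_distrib, hreindex, ih]

theorem sum_mul_sq_sub_walk_le {w : α → ℝ} {K : ℝ} {l : List ι} (hK : 1 ≤ K)
    (hΩ : ∀ i ζ, ζ ∈ Ω → T i ζ ∈ Ω) (hT : ∀ i, Function.Involutive (T i))
    (hw : ∀ ζ ∈ Ω, 0 ≤ w ζ) (hwT : ∀ i ∈ l, ∀ ζ ∈ Ω, w ζ ≤ K * w (T i ζ)) (f : α → ℝ) :
    ∑ ζ ∈ Ω, w ζ * (f (walk T l ζ) - f ζ) ^ 2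
      ≤ l.length * K ^ l.length * (l.map fun i => ∑ ζ ∈ Ω, w ζ * (f (T i ζ) - f ζ) ^ 2).sum := by
  set c : ℝ := l.length * K ^ l.length
  let energy : ι × α → ℝ := fun s => w s.2 * (f (T s.1 s.2) - f s.2) ^ 2
  have hpointwise : ∀ ζ ∈ Ω, w ζ * (f (walk T l ζ) - f ζ) ^ 2
      ≤ ((walkSteps T l ζ).map fun s => c * energy s).sum := by
    intro ζ hζ
    have hsteps := le_pow_mul_of_mem_walkSteps hK hΩ hw hwT hζ
    rw [sub_walk_eq_sum_walkSteps, List.sum_map_mul_left]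
    calc w ζ * ((walkSteps T l ζ).map fun s => f (T s.1 s.2) - f s.2).sum ^ 2
        ≤ w ζ * (l.length * ((walkSteps T l ζ).map fun s => (f (T s.1 s.2) - f s.2) ^ 2).sum) := by
          gcongr
          · exact hw ζ hζ
          · simpa using sq_sum_map_le_length_mul (walkSteps T l ζ) fun s => f (T s.1 s.2) - f s.2
      _ = l.length * ((walkSteps T l ζ).map fun s => w ζ * (f (T s.1 s.2) - f s.2) ^ 2).sum := by
          rw [List.sum_map_mul_left]; ring
      _ ≤ l.length * ((walkSteps T l ζ).map fun s => K ^ l.length * energy s).sum := by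
          gcongr
          refine List.sum_le_sum fun s hs => ?_
          rw [← mul_assoc]
          exact mul_le_mul_of_nonneg_right (hsteps s hs) (sq_nonneg _)
      _ = c * ((walkSteps T l ζ).map energy).sum := by
          rw [List.sum_map_mul_left]; ring
  calc ∑ ζ ∈ Ω, w ζ * (f (walk T l ζ) - f ζ) ^ 2
      ≤ ∑ ζ ∈ Ω, ((walkSteps T l ζ).map fun s => c * energy s).sum :=
        Finset.sum_le_sum hpointwise
    _ = c * (l.map fun i => ∑ ζ ∈ Ω, energy (i, ζ)).sum := by
        rw [sum_sum_walkSteps hΩ hT, ← List.sum_map_mul_left]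
        simp [Finset.mul_sum]

end Walk

section Exchange
variable {N : ℕ}

theorem exch_eq_comp_swap (ζ : Fin N → Fin 3) (x y : Fin N) :
    exch ζ x y = ζ ∘ Equiv.swap x y := by
  funext z
  simp only [exch, Function.comp_apply, Equiv.swap_apply_def]
  split_ifs <;> rfl

theorem exch_comm (ζ : Fin N → Fin 3) (x y : Fin N) : exch ζ x y = exch ζ y x := by
  rw [exch_eq_comp_swap, exch_eq_comp_swap, Equiv.swap_comm]

theorem exch_involutive (x y : Fin N) :
    Function.Involutive fun ζ : Fin N → Fin 3 => exch ζ x y := by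
  intro ζ
  funext z
  simp [exch_eq_comp_swap]

theorem exch_exch_exch {x q y : Fin N} (hxq : x ≠ q) (hxy : x ≠ y) (ζ : Fin N → Fin 3) :
    exch (exch (exch ζ q y) x q) q y = exch ζ x y := by
  simp only [exch_eq_comp_swap, Function.comp_assoc, ← Equiv.Perm.coe_mul,
    Equiv.swap_mul_swap_mul_swap hxq hxy, Equiv.swap_comm y x]

theorem mem_OmegaF {ζ : Fin N → Fin 3} : ζ ∈ OmegaF N ↔ inOmega ζ := by
  simp [OmegaF]

theorem exch_mem_OmegaF {ζ : Fin N → Fin 3} (hζ : ζ ∈ OmegaF N) (x y : Fin N) :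
    exch ζ x y ∈ OmegaF N := by
  rw [mem_OmegaF] at hζ ⊢
  intro a
  convert hζ a using 2
  rw [exch_eq_comp_swap]
  exact Finset.card_equiv (Equiv.swap x y) (by simp)

end Exchange

section Energy
variable {N : ℕ}

def pairEnergy (a b : Fin 3) : ℝ :=
  (if a = 0 then 1 else 0) * (if b = 2 then 1 else 0) +
    (if a = 1 then 1 else 0) * (if b = 0 then 1 else 0) +
    (if a = 2 then 1 else 0) * (if b = 1 then 1 else 0)

theorem abs_pairEnergy_sub_le (a b : Fin 3) : |pairEnergy a b - pairEnergy b a| ≤ 1 := by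
  fin_cases a <;> fin_cases b <;> simp +decide [pairEnergy]

theorem HN_eq_sum_pairEnergy (ζ : Fin N → Fin 3) :
    HN ζ = (1 / (N : ℝ) ^ 2) *
      ∑ x : Fin N, ∑ y : Fin N, if (x : ℕ) < (y : ℕ) then pairEnergy (ζ x) (ζ y) else 0 :=
  rfl

theorem ite_swap_lt_swap {p q : Fin N} (hpq : (q : ℕ) = p + 1) (u v : Fin N) (a : ℝ) :
    (if ((Equiv.swap p q u : Fin N) : ℕ) < (Equiv.swap p q v : Fin N) then a else 0)
      = (if (u : ℕ) < v then a else 0) + (if u = q ∧ v = p then a else 0)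
        - (if u = p ∧ v = q then a else 0) := by
  simp only [Equiv.swap_apply_def, Fin.ext_iff]
  split_ifs <;> first | (exfalso; omega) | ring

theorem sum_ordered_pairs_comp_swap (g : Fin N → Fin N → ℝ) {p q : Fin N}
    (hpq : (q : ℕ) = p + 1) :
    ∑ x : Fin N, ∑ y : Fin N,
        (if (x : ℕ) < (y : ℕ) then g (Equiv.swap p q x) (Equiv.swap p q y) else 0)
      = (∑ x : Fin N, ∑ y : Fin N, if (x : ℕ) < (y : ℕ) then g x y else 0) + g q p - g p q := by
  have hreindex : ∑ x : Fin N, ∑ y : Fin N,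
      (if (x : ℕ) < (y : ℕ) then g (Equiv.swap p q x) (Equiv.swap p q y) else 0)
        = ∑ u : Fin N, ∑ v : Fin N,
            if ((Equiv.swap p q u : Fin N) : ℕ) < (Equiv.swap p q v : Fin N) then g u v else 0 := by
    rw [← Equiv.sum_comp (Equiv.swap p q)]
    refine Finset.sum_congr rfl fun u _ => ?_
    rw [← Equiv.sum_comp (Equiv.swap p q)]
    simp
  rw [hreindex]
  simp only [ite_swap_lt_swap hpq, Finset.sum_add_distrib, Finset.sum_sub_distrib, ite_and]
  simp

theorem abs_HN_exch_sub_le (ζ : Fin N → Fin 3) {p q : Fin N} (hpq : (q : ℕ) = p + 1) :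
    |HN (exch ζ p q) - HN ζ| ≤ 1 / (N : ℝ) ^ 2 := by
  have hdiff : HN (exch ζ p q) - HN ζ
      = 1 / (N : ℝ) ^ 2 * (pairEnergy (ζ q) (ζ p) - pairEnergy (ζ p) (ζ q)) := by
    rw [HN_eq_sum_pairEnergy, HN_eq_sum_pairEnergy, exch_eq_comp_swap]
    simp only [Function.comp_apply]
    rw [sum_ordered_pairs_comp_swap (fun u v => pairEnergy (ζ u) (ζ v)) hpq]
    ring
  rw [hdiff, abs_mul, abs_of_nonneg (by positivity)]
  exact mul_le_of_le_one_right (by positivity) (abs_pairEnergy_sub_le _ _)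

end Energy

section Gibbs
variable {N : ℕ} {β : ℝ}

theorem nu_nonneg (N : ℕ) (β : ℝ) (ζ : Fin N → Fin 3) : 0 ≤ nu N β ζ :=
  div_nonneg (Real.exp_pos _).le (Finset.sum_nonneg fun _ _ => (Real.exp_pos _).le)

theorem nu_le_exp_mul_nu (hβ : 0 ≤ β) {ζ ξ : Fin N → Fin 3} {δ : ℝ} (h : |HN ξ - HN ζ| ≤ δ) :
    nu N β ζ ≤ Real.exp (β * N * δ) * nu N β ξ := by
  unfold nu
  rw [← mul_div_assoc, ← Real.exp_add]
  gcongr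
  · exact Finset.sum_nonneg fun _ _ => (Real.exp_pos _).le
  · have hβN : 0 ≤ β * N := by positivity
    nlinarith [mul_le_mul_of_nonneg_left ((le_abs_self _).trans h) hβN]

end Gibbs

section NearestNeighbour
variable {N : ℕ}

def exchSucc (z : Fin N) (ζ : Fin N → Fin 3) : Fin N → Fin 3 := exch ζ z (fsucc z)

theorem val_fsucc_of_lt {z : Fin N} (hz : (z : ℕ) + 1 < N) : (fsucc z : ℕ) = z + 1 :=
  Nat.mod_eq_of_lt hz

theorem exists_exchSucc_path {x y : Fin N} (hxy : (x : ℕ) < y) :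
    ∃ l : List (Fin N), (∀ z ∈ l, (z : ℕ) < y) ∧ (∀ ζ, walk exchSucc l ζ = exch ζ x y) ∧
      l.length + 1 = 2 * ((y : ℕ) - x) ∧ ∀ z, l.count z ≤ 2 := by
  obtain ⟨d, hd⟩ : ∃ d, (y : ℕ) = x + d + 1 := ⟨y - x - 1, by omega⟩
  induction d generalizing y with
  | zero =>
    have hy : fsucc x = y := Fin.ext (by rw [val_fsucc_of_lt (by omega)]; omega)
    refine ⟨[x], by simp; omega, fun ζ => by simp [exchSucc, hy], by simp; omega, fun z => ?_⟩
    simp only [List.count_singleton]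
    split_ifs <;> omega
  | succ d ih =>
    set q : Fin N := ⟨x + d + 1, by omega⟩
    have hqv : (q : ℕ) = x + d + 1 := rfl
    have hqy : fsucc q = y := Fin.ext (by rw [val_fsucc_of_lt (by omega)]; omega)
    obtain ⟨l, hl_lt, hl_walk, hl_len, hl_count⟩ := ih (y := q) (by omega) rfl
    refine ⟨q :: l ++ [q], ?_, fun ζ => ?_, ?_, fun z => ?_⟩
    · intro z hz
      simp only [List.cons_append, List.mem_cons, List.mem_append, List.not_mem_nil,
        or_false] at hz
      rcases hz with rfl | hz | rfl
      · omega
      · exact (hl_lt z hz).trans (by omega)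
      · omega
    · have hxq : x ≠ q := fun h => by rw [Fin.ext_iff] at h; omega
      have hxy : x ≠ y := fun h => by rw [h] at hd; omega
      simp only [List.cons_append, walk_cons, walk_append, hl_walk, exchSucc, hqy, walk_nil,
        exch_exch_exch hxq hxy]
    · simp only [List.cons_append, List.length_cons, List.length_append, List.length_nil]
      omega
    · have hq : q ∉ l := fun h => (hl_lt q h).false
      simp only [List.cons_append, List.count_cons, List.count_append, List.count_nil, beq_iff_eq]
      by_cases hz : q = z
      · subst hz; simp [List.count_eq_zero_of_not_mem hq]
      · simp [hz, hl_count z]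

theorem abs_HN_exchSucc_sub_le {z : Fin N} (hz : (z : ℕ) + 1 < N) (ζ : Fin N → Fin 3) :
    |HN (exchSucc z ζ) - HN ζ| ≤ 1 / (N : ℝ) ^ 2 :=
  abs_HN_exch_sub_le ζ (val_fsucc_of_lt hz)

theorem nu_le_exp_mul_nu_exchSucc {β : ℝ} (hβ : 0 ≤ β) {z : Fin N} (hz : (z : ℕ) + 1 < N)
    (ζ : Fin N → Fin 3) : nu N β ζ ≤ Real.exp (β / N) * nu N β (exchSucc z ζ) := by
  have hN : (N : ℝ) ≠ 0 := by exact_mod_cast z.pos.ne'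
  convert nu_le_exp_mul_nu hβ (abs_HN_exchSucc_sub_le hz ζ) using 3
  field_simp

theorem cnn_pos (β : ℝ) (z : Fin N) (ζ : Fin N → Fin 3) : 0 < cnn β z ζ := by
  unfold cnn
  split_ifs <;> positivity

theorem one_le_exp_mul_cnn {β : ℝ} (hβ : 0 ≤ β) (z : Fin N) (ζ : Fin N → Fin 3) :
    1 ≤ Real.exp (β / (2 * N)) * cnn β z ζ := by
  have hlow : Real.exp (-(β / (2 * N))) ≤ cnn β z ζ := by
    have : 0 ≤ β / (2 * N) := by positivity
    unfold cnn
    split_ifs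
    · exact le_rfl
    · exact Real.exp_le_exp.2 (by linarith)
  calc (1 : ℝ) = Real.exp (β / (2 * N)) * Real.exp (-(β / (2 * N))) := by
        rw [← Real.exp_add, add_neg_cancel, Real.exp_zero]
    _ ≤ Real.exp (β / (2 * N)) * cnn β z ζ := by gcongr

theorem ccg_le {β : ℝ} (hβ : 0 ≤ β) {x y : Fin N} {ζ : Fin N → Fin 3} {δ : ℝ}
    (h : |HN (exch ζ x y) - HN ζ| ≤ δ) : ccg β x y ζ ≤ 1 / N * Real.exp (β * N * δ / 2) := by
  unfold ccg
  gcongr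
  have hβN : 0 ≤ β * N := by positivity
  nlinarith [mul_le_mul_of_nonneg_left ((neg_le_abs _).trans h) hβN]

end NearestNeighbour

/-- The four factors are the bound on `c_{x,y}`, the Cauchy–Schwarz and weight-change factor of
the path, the lower bound on `c_z`, and the multiplicity of a bond in the path. -/
theorem path_constant_le {β : ℝ} (hβ : 0 ≤ β) {N n : ℕ} (hn : n < 2 * N) :
    1 / N * Real.exp (β * N * (n * (1 / (N : ℝ) ^ 2)) / 2) * (n * Real.exp (β / N) ^ n)
        * Real.exp (β / (2 * N)) * 2 ≤ 4 * Real.exp (3 * β) := by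
  have hN : (0 : ℝ) < N := by exact_mod_cast (show 0 < N by omega)
  have hn' : (n : ℝ) + 1 ≤ 2 * N := by exact_mod_cast hn
  have hexp : Real.exp (β * N * (n * (1 / (N : ℝ) ^ 2)) / 2) * Real.exp (β / N) ^ n
      * Real.exp (β / (2 * N)) = Real.exp (β * (3 * n + 1) / (2 * N)) := by
    rw [← Real.exp_nat_mul, ← Real.exp_add, ← Real.exp_add]
    congr 1
    field_simp
    ring
  calc 1 / N * Real.exp (β * N * (n * (1 / (N : ℝ) ^ 2)) / 2) * (n * Real.exp (β / N) ^ n)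
        * Real.exp (β / (2 * N)) * 2
      = 2 * n / N * Real.exp (β * (3 * n + 1) / (2 * N)) := by
        rw [← hexp]; field_simp
    _ ≤ 4 * Real.exp (3 * β) := by
        gcongr
        · rw [div_le_iff₀ hN]; linarith
        · rw [div_le_iff₀ (by positivity)]; nlinarith

section Comparison
variable {N : ℕ} {β : ℝ}

theorem ccg_comm (β : ℝ) (x y : Fin N) : ccg β x y = ccg β y x := by
  funext ζ
  rw [ccg, ccg, exch_comm]

theorem grad_comm (f : (Fin N → Fin 3) → ℝ) (x y : Fin N) : grad f x y = grad f y x := by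
  funext ζ
  rw [grad, grad, exch_comm]

theorem expect_nonneg {F : (Fin N → Fin 3) → ℝ} (hF : ∀ ζ, 0 ≤ F ζ) : 0 ≤ expect N β F :=
  Finset.sum_nonneg fun ζ _ => mul_nonneg (nu_nonneg N β ζ) (hF ζ)

theorem Dnn_nonneg (N : ℕ) (β : ℝ) (f : (Fin N → Fin 3) → ℝ) : 0 ≤ Dnn N β f :=
  mul_nonneg (by norm_num) (Finset.sum_nonneg fun z _ => expect_nonneg fun ζ =>
    mul_nonneg (cnn_pos β z ζ).le (sq_nonneg _))

theorem sum_nu_mul_sq_sub_exchSucc_le (hβ : 0 ≤ β) (f : (Fin N → Fin 3) → ℝ) (z : Fin N) :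
    ∑ ζ ∈ OmegaF N, nu N β ζ * (f (exchSucc z ζ) - f ζ) ^ 2
      ≤ Real.exp (β / (2 * N)) * expect N β (fun ζ => cnn β z ζ * grad f z (fsucc z) ζ ^ 2) := by
  rw [expect, Finset.mul_sum]
  refine Finset.sum_le_sum fun ζ _ => ?_
  calc nu N β ζ * (f (exchSucc z ζ) - f ζ) ^ 2
      ≤ nu N β ζ * (f (exchSucc z ζ) - f ζ) ^ 2 * (Real.exp (β / (2 * N)) * cnn β z ζ) :=
        le_mul_of_one_le_right (mul_nonneg (nu_nonneg N β ζ) (sq_nonneg _))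
          (one_le_exp_mul_cnn hβ z ζ)
    _ = Real.exp (β / (2 * N)) * (nu N β ζ * (cnn β z ζ * grad f z (fsucc z) ζ ^ 2)) := by
        rw [grad, exchSucc]; ring

theorem expect_ccg_mul_sq_grad_le (hβ : 0 ≤ β) (f : (Fin N → Fin 3) → ℝ) {x y : Fin N}
    (hxy : (x : ℕ) < y) :
    expect N β (fun ζ => ccg β x y ζ * grad f x y ζ ^ 2)
      ≤ 8 * Real.exp (3 * β) * Dnn N β f := by
  obtain ⟨l, hl_lt, hl_walk, hl_len, hl_count⟩ := exists_exchSucc_path hxy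
  have hl_adj : ∀ z ∈ l, (z : ℕ) + 1 < N := fun z hz => by have := hl_lt z hz; omega
  set n := l.length
  set E : Fin N → ℝ := fun z => expect N β (fun ζ => cnn β z ζ * grad f z (fsucc z) ζ ^ 2)
  have hE : ∀ z, 0 ≤ E z := fun z => expect_nonneg fun ζ =>
    mul_nonneg (cnn_pos β z ζ).le (sq_nonneg _)
  have hH : ∀ ζ, |HN (exch ζ x y) - HN ζ| ≤ n * (1 / (N : ℝ) ^ 2) := fun ζ =>
    hl_walk ζ ▸ abs_sub_walk_le (fun z hz => abs_HN_exchSucc_sub_le (hl_adj z hz)) ζ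
  have hwalk := sum_mul_sq_sub_walk_le (T := exchSucc)
    (Real.one_le_exp (by positivity : 0 ≤ β / N))
    (fun _ _ hζ => exch_mem_OmegaF hζ _ _) (fun z => exch_involutive z (fsucc z))
    (fun ζ _ => nu_nonneg N β ζ) (fun z hz ζ _ => nu_le_exp_mul_nu_exchSucc hβ (hl_adj z hz) ζ) f
  set c := 1 / N * Real.exp (β * N * (n * (1 / (N : ℝ) ^ 2)) / 2)
  calc expect N β (fun ζ => ccg β x y ζ * grad f x y ζ ^ 2)
      ≤ c * ∑ ζ ∈ OmegaF N, nu N β ζ * (f (walk exchSucc l ζ) - f ζ) ^ 2 := by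
        rw [expect, Finset.mul_sum]
        refine Finset.sum_le_sum fun ζ _ => ?_
        rw [grad, hl_walk, mul_left_comm]
        exact mul_le_mul_of_nonneg_right (ccg_le hβ (hH ζ))
          (mul_nonneg (nu_nonneg N β ζ) (sq_nonneg _))
    _ ≤ c * (n * Real.exp (β / N) ^ n *
          (l.map fun z => ∑ ζ ∈ OmegaF N, nu N β ζ * (f (exchSucc z ζ) - f ζ) ^ 2).sum) :=
        mul_le_mul_of_nonneg_left hwalk (by positivity)
    _ ≤ c * (n * Real.exp (β / N) ^ n * (Real.exp (β / (2 * N)) * (l.map E).sum)) := by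
        gcongr
        rw [← List.sum_map_mul_left]
        exact List.sum_le_sum fun z _ => sum_nu_mul_sq_sub_exchSucc_le hβ f z
    _ ≤ c * (n * Real.exp (β / N) ^ n * (Real.exp (β / (2 * N)) * (2 * ∑ z, E z))) := by
        gcongr
        exact_mod_cast sum_map_le_mul_sum_of_count_le hl_count hE
    _ = c * (n * Real.exp (β / N) ^ n) * Real.exp (β / (2 * N)) * 2 * ∑ z, E z := by ring
    _ ≤ 4 * Real.exp (3 * β) * ∑ z, E z :=
        mul_le_mul_of_nonneg_right (path_constant_le hβ (by have := y.isLt; omega))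
          (Finset.sum_nonneg fun z _ => hE z)
    _ = 8 * Real.exp (3 * β) * Dnn N β f := by rw [Dnn]; ring

end Comparison

theorem dirichlet_form_comparison_general (β : ℝ) (hβ : 0 ≤ β) (N : ℕ)
    (f : (Fin N → Fin 3) → ℝ) :
    Dcg N β f ≤ 2 * Real.exp (3 * β) * (N : ℝ) ^ 2 * Dnn N β f := by
  have hpair : ∀ x y : Fin N, x ≠ y →
      expect N β (fun ζ => ccg β x y ζ * grad f x y ζ ^ 2) ≤ 8 * Real.exp (3 * β) * Dnn N β f := by
    intro x y hxy
    rcases lt_or_gt_of_ne (Fin.val_ne_of_ne hxy) with h | h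
    · exact expect_ccg_mul_sq_grad_le hβ f h
    · rw [ccg_comm, grad_comm]
      exact expect_ccg_mul_sq_grad_le hβ f h
  calc Dcg N β f
      ≤ 1 / 2 * (1 / 2 * ∑ _x : Fin N, ∑ _y : Fin N, 8 * Real.exp (3 * β) * Dnn N β f) := by
        unfold Dcg
        gcongr with x _ y _
        split_ifs with hxy
        · exact hpair x y hxy
        · exact mul_nonneg (by positivity) (Dnn_nonneg N β f)
    _ = 2 * Real.exp (3 * β) * (N : ℝ) ^ 2 * Dnn N β f := by
        simp only [Finset.sum_const, Finset.card_univ, Fintype.card_fin, nsmul_eq_mul]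
        ring

/-- Comparison of Dirichlet forms:
`𝒟_N^β(f,f) ≤ 2 e^{3β} N² D_N^β(f,f)`. -/
theorem dirichlet_form_comparison (β : ℝ) (hβ : 0 ≤ β) (N : ℕ) (hN : 0 < N)
    (h3 : 3 ∣ N) (f : (Fin N → Fin 3) → ℝ) :
    Dcg N β f ≤ 2 * Real.exp (3 * β) * (N : ℝ) ^ 2 * Dnn N β f :=
  dirichlet_form_comparison_general β hβ N f

end ABC
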